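/- arXiv:2207.04243 — 2 statements merged into one kernel-verified Lean document; each statement's English description precedes it below -/
import Mathlib

section
/- Let (T, Σ) be a measurable space, M a nonempty σ-bounded family of measures on Σ, X a Banach space and θ a Young function. If (f_n) is a sequence of strongly measurable functions T → X with ‖f_n‖_{θ,M} < ∞ for all n and ‖f_n − f_m‖_{θ,M} → 0 as n, m → ∞, then there exists a strongly measurable f : T → X with ‖f‖_{θ,M} < ∞ such that ‖f_n − f‖_{θ,M} → 0 as n → ∞; that is, H^θ(M,X) is complete with respect to ‖·‖_{θ,M}. -/
/-! Choose a subsequence `f (n k)` that is Cauchy so fast in `‖·‖_{θ,M}` that Chebyshev's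
inequality, together with `θ u → ∞`, gives `μ {‖f (n k) - f (n (k+1))‖ ≥ 2⁻ᵏ} ≤ 2⁻ᵏ` for every
`μ ∈ M`. By Borel–Cantelli the subsequence converges outside the limsup of these sets, which is
null for every `μ ∈ M` at once; call the limit `g`. Fatou's lemma applied to
`θ (‖f p - f (n m)‖ / c)` as `m → ∞` turns the Cauchy condition into `‖f p - g‖_{θ,M} → 0`, and
convexity of `θ` bounds `‖g‖_{θ,M}` through `‖f p‖_{θ,M}` and `‖f p - g‖_{θ,M}`. -/

open MeasureTheory Filter Set

/-- A Young function: `θ u = ∫₀ᵘ χ(t) dt` for some non-decreasing, left-continuous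
`χ : [0,∞) → [0,∞)` with `χ 0 = 0` which is not identically zero. -/
def IsYoungFunction (θ : ℝ → ℝ) : Prop :=
  ∃ χ : ℝ → ℝ,
    (∀ t, 0 ≤ t → 0 ≤ χ t) ∧
    (∀ s t, 0 ≤ s → s ≤ t → χ s ≤ χ t) ∧
    (∀ t, 0 < t → Tendsto χ (nhdsWithin t (Set.Iio t)) (nhds (χ t))) ∧
    χ 0 = 0 ∧
    (∃ t, 0 ≤ t ∧ χ t ≠ 0) ∧
    (∀ u, 0 ≤ u → θ u = ∫ t in (0:ℝ)..u, χ t)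

/-- A family `M` of measures is σ-bounded: `T = ⋃ᵢ Eᵢ` with the `Eᵢ` pairwise disjoint
measurable sets and `sup_{μ ∈ M} μ (Eᵢ) < ∞` for every `i`. -/
def SigmaBounded {T : Type*} [MeasurableSpace T] (M : Set (Measure T)) : Prop :=
  ∃ E : ℕ → Set T,
    (∀ i, MeasurableSet (E i)) ∧
    (Pairwise fun i j => Disjoint (E i) (E j)) ∧
    (⋃ i, E i) = Set.univ ∧
    ∀ i, (⨆ μ ∈ M, μ (E i)) < ⊤

/-- The Luxemburg norm of `f` with respect to the Young function `θ` and the family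
of measures `M` : `inf {k > 0 : sup_{μ ∈ M} ∫ θ(‖f‖/k) dμ ≤ 1}`. -/
noncomputable def luxNormM {T X : Type*} [MeasurableSpace T] [NormedAddCommGroup X]
    (θ : ℝ → ℝ) (M : Set (Measure T)) (f : T → X) : ENNReal :=
  sInf {k : ENNReal | 0 < k ∧ k ≠ ⊤ ∧
    ∀ μ ∈ M, ∫⁻ t, ENNReal.ofReal (θ (‖f t‖ / k.toReal)) ∂μ ≤ 1}

open scoped ENNReal Topology

theorem MonotoneOn.mul_sub_le_intervalIntegral {χ : ℝ → ℝ} {u v : ℝ}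
    (hχ : MonotoneOn χ (Icc u v)) (huv : u ≤ v) :
    χ u * (v - u) ≤ ∫ t in u..v, χ t := by
  have hint : IntervalIntegrable χ volume u v := (uIcc_of_le huv ▸ hχ).intervalIntegrable
  calc χ u * (v - u) = ∫ _ in u..v, χ u := by simp [mul_comm]
    _ ≤ ∫ t in u..v, χ t := intervalIntegral.integral_mono_on huv intervalIntegrable_const hint
          fun t ht => hχ ⟨le_rfl, huv⟩ ht ht.1

theorem MonotoneOn.intervalIntegral_le_mul_sub {χ : ℝ → ℝ} {u v : ℝ}
    (hχ : MonotoneOn χ (Icc u v)) (huv : u ≤ v) :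
    ∫ t in u..v, χ t ≤ χ v * (v - u) := by
  have hint : IntervalIntegrable χ volume u v := (uIcc_of_le huv ▸ hχ).intervalIntegrable
  calc ∫ t in u..v, χ t ≤ ∫ _ in u..v, χ v :=
        intervalIntegral.integral_mono_on huv hint intervalIntegrable_const
          fun t ht => hχ ht ⟨huv, le_rfl⟩ ht.2
    _ = χ v * (v - u) := by simp [mul_comm]

namespace IsYoungFunction

variable {θ : ℝ → ℝ}

theorem exists_slope_bounds (hθ : IsYoungFunction θ) :
    ∃ χ : ℝ → ℝ, (∃ t₀, 0 ≤ t₀ ∧ 0 < χ t₀) ∧ (∀ t, 0 ≤ t → 0 ≤ χ t) ∧ ∀ u v, 0 ≤ u → u ≤ v →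
      χ u * (v - u) ≤ θ v - θ u ∧ θ v - θ u ≤ χ v * (v - u) := by
  obtain ⟨χ, hχ0, hmono, -, -, ⟨t₀, ht₀, hχt₀⟩, hθχ⟩ := hθ
  refine ⟨χ, ⟨t₀, ht₀, (hχ0 t₀ ht₀).lt_of_ne' hχt₀⟩, hχ0, fun u v hu huv => ?_⟩
  have hχ : MonotoneOn χ (Ici 0) := fun s hs t _ hst => hmono s t hs hst
  have hint : ∀ w, 0 ≤ w → IntervalIntegrable χ volume 0 w := fun w hw =>
    (hχ.mono (uIcc_of_le hw ▸ Icc_subset_Ici_self)).intervalIntegrable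
  have hsub : θ v - θ u = ∫ t in u..v, χ t := by
    rw [hθχ u hu, hθχ v (hu.trans huv),
      intervalIntegral.integral_interval_sub_left (hint v (hu.trans huv)) (hint u hu)]
  have hχuv : MonotoneOn χ (Icc u v) := hχ.mono (Icc_subset_Ici_self.trans (Ici_subset_Ici.2 hu))
  rw [hsub]
  exact ⟨hχuv.mul_sub_le_intervalIntegral huv, hχuv.intervalIntegral_le_mul_sub huv⟩

theorem monotoneOn (hθ : IsYoungFunction θ) : MonotoneOn θ (Ici 0) := by
  obtain ⟨χ, -, hχ0, hslope⟩ := hθ.exists_slope_bounds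
  intro u hu v _ huv
  nlinarith [(hslope u v hu huv).1, hχ0 u hu]

theorem convexOn (hθ : IsYoungFunction θ) : ConvexOn ℝ (Ici 0) θ := by
  obtain ⟨χ, -, -, hslope⟩ := hθ.exists_slope_bounds
  refine convexOn_of_slope_mono_adjacent (convex_Ici 0) fun {x y z} hx _ hxy hyz => ?_
  have hy : (0 : ℝ) ≤ y := le_trans hx hxy.le
  calc (θ y - θ x) / (y - x) ≤ χ y := (div_le_iff₀ (sub_pos.2 hxy)).2 (hslope x y hx hxy.le).2
    _ ≤ (θ z - θ y) / (z - y) := (le_div_iff₀ (sub_pos.2 hyz)).2 (hslope y z hy hyz.le).1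

theorem tendsto_atTop (hθ : IsYoungFunction θ) : Tendsto θ atTop atTop := by
  obtain ⟨χ, ⟨t₀, ht₀, hχt₀⟩, -, hslope⟩ := hθ.exists_slope_bounds
  refine tendsto_atTop_mono' atTop ((eventually_ge_atTop t₀).mono fun u hu =>
    le_sub_iff_add_le'.1 (hslope t₀ u ht₀ hu).1) ?_
  exact tendsto_atTop_add_const_left _ _
    ((tendsto_atTop_add_const_right _ _ tendsto_id).const_mul_atTop hχt₀)

theorem continuousOn (hθ : IsYoungFunction θ) : ContinuousOn θ (Ici 0) := by
  obtain ⟨χ, -, hmono, -, -, -, hθχ⟩ := hθ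
  intro x hx
  have hx1 : 0 ≤ x + 1 := by linarith [mem_Ici.1 hx]
  have hχ : MonotoneOn χ (uIcc 0 (x + 1)) := fun s hs t _ hst =>
    hmono s t (uIcc_of_le hx1 ▸ hs).1 hst
  have hIcc : ContinuousOn θ (Icc 0 (x + 1)) :=
    (uIcc_of_le hx1 ▸ intervalIntegral.continuousOn_primitive_interval
      (hχ.integrableOn_isCompact isCompact_uIcc)).congr fun y hy => hθχ y hy.1
  refine (hIcc x ⟨hx, by linarith⟩).mono_of_mem_nhdsWithin ?_
  exact mem_nhdsWithin.2 ⟨Iio (x + 1), isOpen_Iio, by simp, fun y hy => ⟨hy.2, hy.1.le⟩⟩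

end IsYoungFunction

section Luxemburg

variable {T X : Type*} [MeasurableSpace T] [NormedAddCommGroup X] {θ : ℝ → ℝ}
  {M : Set (Measure T)} {f g : T → X}

def luxAdmissible (θ : ℝ → ℝ) (M : Set (Measure T)) (f : T → X) : Set ℝ≥0∞ :=
  {k | 0 < k ∧ k ≠ ⊤ ∧ ∀ μ ∈ M, ∫⁻ t, ENNReal.ofReal (θ (‖f t‖ / k.toReal)) ∂μ ≤ 1}

theorem luxNormM_eq_sInf : luxNormM θ M f = sInf (luxAdmissible θ M f) := rfl

theorem mem_luxAdmissible_of_le (hmono : MonotoneOn θ (Ici 0)) {k₁ k₂ : ℝ≥0∞}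
    (hk₁ : k₁ ∈ luxAdmissible θ M f) (hle : k₁ ≤ k₂) (hk₂ : k₂ ≠ ⊤) :
    k₂ ∈ luxAdmissible θ M f := by
  obtain ⟨hk₁0, hk₁top, hint⟩ := hk₁
  have hpos : 0 < k₁.toReal := ENNReal.toReal_pos hk₁0.ne' hk₁top
  have hle' : k₁.toReal ≤ k₂.toReal := ENNReal.toReal_mono hk₂ hle
  refine ⟨hk₁0.trans_le hle, hk₂, fun μ hμ => le_trans (lintegral_mono fun t => ?_) (hint μ hμ)⟩
  have hnorm : (0 : ℝ) ≤ ‖f t‖ := norm_nonneg _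
  exact ENNReal.ofReal_le_ofReal <| hmono (div_nonneg hnorm (hpos.trans_le hle').le)
    (div_nonneg hnorm hpos.le) (div_le_div_of_nonneg_left hnorm hpos hle')

theorem mem_luxAdmissible_of_luxNormM_lt (hmono : MonotoneOn θ (Ici 0)) {k : ℝ≥0∞}
    (hlt : luxNormM θ M f < k) (hk : k ≠ ⊤) : k ∈ luxAdmissible θ M f := by
  rw [luxNormM_eq_sInf] at hlt
  obtain ⟨k₁, hk₁, hk₁k⟩ := sInf_lt_iff.1 hlt
  exact mem_luxAdmissible_of_le hmono hk₁ hk₁k.le hk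

theorem measurable_ofReal_comp_norm_div (hcont : ContinuousOn θ (Ici 0))
    (hf : StronglyMeasurable f) {c : ℝ} (hc : 0 ≤ c) :
    Measurable fun t => ENNReal.ofReal (θ (‖f t‖ / c)) := by
  have hθ' : Continuous fun u => θ (max u 0) :=
    hcont.comp_continuous (continuous_id.max continuous_const) fun u => le_max_right u 0
  have hθf : Measurable fun t => θ (max (‖f t‖ / c) 0) :=
    hθ'.measurable.comp (hf.norm.measurable.div_const c)
  have hmax := fun t => max_eq_left (div_nonneg (norm_nonneg (f t)) hc)
  simp only [hmax] at hθf
  exact ENNReal.measurable_ofReal.comp hθf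

theorem measure_le_norm_le_inv_of_luxNormM_lt (hmono : MonotoneOn θ (Ici 0))
    (hcont : ContinuousOn θ (Ici 0)) (hf : StronglyMeasurable f) {ε u : ℝ} (hu : 0 < u)
    (hlt : luxNormM θ M f < ENNReal.ofReal (ε / u)) {μ : Measure T} (hμ : μ ∈ M) :
    μ {t | ε ≤ ‖f t‖} ≤ (ENNReal.ofReal (θ u))⁻¹ := by
  obtain ⟨hk0, -, hint⟩ := mem_luxAdmissible_of_luxNormM_lt hmono hlt ENNReal.ofReal_ne_top
  have hεu : 0 < ε / u := ENNReal.ofReal_pos.1 hk0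
  rw [ENNReal.toReal_ofReal hεu.le] at hint
  have hsub : {t | ε ≤ ‖f t‖} ⊆
      {t | ENNReal.ofReal (θ u) ≤ ENNReal.ofReal (θ (‖f t‖ / (ε / u)))} := fun t ht => by
    refine ENNReal.ofReal_le_ofReal (hmono hu.le (div_nonneg (norm_nonneg _) hεu.le) ?_)
    rw [le_div_iff₀ hεu, mul_div_cancel₀ _ hu.ne']
    exact ht
  have hmarkov := mul_meas_ge_le_lintegral₀ (μ := μ)
    (measurable_ofReal_comp_norm_div hcont hf hεu.le).aemeasurable (ENNReal.ofReal (θ u))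
  refine ENNReal.le_inv_iff_mul_le.2 ?_
  rw [mul_comm]
  exact (mul_le_mul_right (measure_mono hsub) _).trans (hmarkov.trans (hint μ hμ))

theorem luxNormM_le_of_tendsto_ae (hmono : MonotoneOn θ (Ici 0))
    (hcont : ContinuousOn θ (Ici 0)) {F : ℕ → T → X} (hF : ∀ m, StronglyMeasurable (F m))
    (hlim : ∀ μ ∈ M, ∀ᵐ t ∂μ, Tendsto (fun m => F m t) atTop (𝓝 (g t))) {c : ℝ≥0∞}
    (hc : c ≠ ⊤) (hev : ∀ᶠ m in atTop, luxNormM θ M (F m) < c) : luxNormM θ M g ≤ c := by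
  have hadm : ∀ᶠ m in atTop, c ∈ luxAdmissible θ M (F m) :=
    hev.mono fun m hm => mem_luxAdmissible_of_luxNormM_lt hmono hm hc
  obtain ⟨hc0, -, -⟩ := hadm.exists.choose_spec
  rw [luxNormM_eq_sInf]
  refine sInf_le ⟨hc0, hc, fun μ hμ => ?_⟩
  have hpt : ∀ᵐ t ∂μ, ENNReal.ofReal (θ (‖g t‖ / c.toReal)) =
      liminf (fun m => ENNReal.ofReal (θ (‖F m t‖ / c.toReal))) atTop := by
    filter_upwards [hlim μ hμ] with t ht
    have hnorm : Tendsto (fun m => ‖F m t‖ / c.toReal) atTop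
        (𝓝[Ici 0] (‖g t‖ / c.toReal)) :=
      tendsto_nhdsWithin_iff.2 ⟨ht.norm.div_const _,
        .of_forall fun m => div_nonneg (norm_nonneg _) ENNReal.toReal_nonneg⟩
    have hθ := (hcont _ (div_nonneg (norm_nonneg _) ENNReal.toReal_nonneg)).tendsto.comp hnorm
    exact ((ENNReal.continuous_ofReal.tendsto _).comp hθ).liminf_eq.symm
  calc ∫⁻ t, ENNReal.ofReal (θ (‖g t‖ / c.toReal)) ∂μ
      = ∫⁻ t, liminf (fun m => ENNReal.ofReal (θ (‖F m t‖ / c.toReal))) atTop ∂μ :=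
        lintegral_congr_ae hpt
    _ ≤ liminf (fun m => ∫⁻ t, ENNReal.ofReal (θ (‖F m t‖ / c.toReal)) ∂μ) atTop :=
        lintegral_liminf_le fun m =>
          measurable_ofReal_comp_norm_div hcont (hF m) ENNReal.toReal_nonneg
    _ ≤ 1 := liminf_le_of_frequently_le' (hadm.mono fun m hm => hm.2.2 μ hμ).frequently

theorem two_mul_mem_luxAdmissible_sub (hmono : MonotoneOn θ (Ici 0))
    (hconv : ConvexOn ℝ (Ici 0) θ) (hcont : ContinuousOn θ (Ici 0))
    (hf : StronglyMeasurable f) {k : ℝ≥0∞} (hkf : k ∈ luxAdmissible θ M f)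
    (hkg : k ∈ luxAdmissible θ M g) : 2 * k ∈ luxAdmissible θ M (fun t => f t - g t) := by
  obtain ⟨hk0, hktop, hintf⟩ := hkf
  have hk : 0 < k.toReal := ENNReal.toReal_pos hk0.ne' hktop
  refine ⟨ENNReal.mul_pos two_ne_zero hk0.ne', ENNReal.mul_ne_top ENNReal.ofNat_ne_top hktop,
    fun μ hμ => ?_⟩
  rw [ENNReal.toReal_mul, ENNReal.toReal_ofNat]
  have hpt : ∀ t, 2 * ENNReal.ofReal (θ (‖f t - g t‖ / (2 * k.toReal))) ≤
      ENNReal.ofReal (θ (‖f t‖ / k.toReal)) + ENNReal.ofReal (θ (‖g t‖ / k.toReal)) := by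
    intro t
    have hx : (0 : ℝ) ≤ ‖f t‖ / k.toReal := by positivity
    have hy : (0 : ℝ) ≤ ‖g t‖ / k.toReal := by positivity
    have hmid : ‖f t - g t‖ / (2 * k.toReal) ≤
        (1 / 2 : ℝ) • (‖f t‖ / k.toReal) + (1 / 2 : ℝ) • (‖g t‖ / k.toReal) :=
      calc ‖f t - g t‖ / (2 * k.toReal) ≤ (‖f t‖ + ‖g t‖) / (2 * k.toReal) := by
            gcongr; exact norm_sub_le _ _
        _ = _ := by rw [smul_eq_mul, smul_eq_mul]; ring
    have hθmid := (hmono (mem_Ici.2 (by positivity)) (hconv.1 hx hy (by norm_num) (by norm_num)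
      (add_halves 1)) hmid).trans (hconv.2 hx hy (by norm_num) (by norm_num) (add_halves 1))
    rw [smul_eq_mul, smul_eq_mul] at hθmid
    calc 2 * ENNReal.ofReal (θ (‖f t - g t‖ / (2 * k.toReal)))
        = ENNReal.ofReal (2 * θ (‖f t - g t‖ / (2 * k.toReal))) := by
          rw [ENNReal.ofReal_mul zero_le_two, ENNReal.ofReal_ofNat]
      _ ≤ ENNReal.ofReal (θ (‖f t‖ / k.toReal) + θ (‖g t‖ / k.toReal)) :=
          ENNReal.ofReal_le_ofReal (by linarith)
      _ ≤ _ := ENNReal.ofReal_add_le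
  have htwo : 2 * ∫⁻ t, ENNReal.ofReal (θ (‖f t - g t‖ / (2 * k.toReal))) ∂μ ≤ 2 * 1 := by
    rw [← lintegral_const_mul' _ _ ENNReal.ofNat_ne_top, mul_one]
    calc _ ≤ _ := lintegral_mono hpt
      _ = _ := lintegral_add_left (measurable_ofReal_comp_norm_div hcont hf hk.le) _
      _ ≤ 1 + 1 := add_le_add (hintf μ hμ) (hkg.2.2 μ hμ)
      _ = 2 := one_add_one_eq_two
  exact (ENNReal.mul_le_mul_iff_right two_ne_zero ENNReal.ofNat_ne_top).1 htwo

theorem luxNormM_sub_lt_top (hmono : MonotoneOn θ (Ici 0)) (hconv : ConvexOn ℝ (Ici 0) θ)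
    (hcont : ContinuousOn θ (Ici 0)) (hf : StronglyMeasurable f) (hf' : luxNormM θ M f < ⊤)
    (hg : luxNormM θ M g < ⊤) : luxNormM θ M (fun t => f t - g t) < ⊤ := by
  rw [luxNormM_eq_sInf] at hf' hg ⊢
  obtain ⟨k₁, hk₁, hk₁top⟩ := sInf_lt_iff.1 hf'
  obtain ⟨k₂, hk₂, hk₂top⟩ := sInf_lt_iff.1 hg
  have hk : max k₁ k₂ ≠ ⊤ := (max_lt hk₁top hk₂top).ne
  have hadm := two_mul_mem_luxAdmissible_sub hmono hconv hcont hf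
    (mem_luxAdmissible_of_le hmono hk₁ (le_max_left _ _) hk)
    (mem_luxAdmissible_of_le hmono hk₂ (le_max_right _ _) hk)
  exact (sInf_le hadm).trans_lt (ENNReal.mul_lt_top ENNReal.ofNat_lt_top hk.lt_top)

end Luxemburg

theorem cauchySeq_of_eventually_dist_lt {X : Type*} [PseudoMetricSpace X] {x : ℕ → X}
    {ε : ℕ → ℝ} (hε : Summable ε) (h : ∀ᶠ k in atTop, dist (x k) (x (k + 1)) < ε k) :
    CauchySeq x :=
  cauchySeq_of_summable_dist <| hε.of_norm_bounded_eventually_nat <|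
    h.mono fun k hk => by rw [Real.norm_of_nonneg dist_nonneg]; exact hk.le

/-- Borel–Cantelli: the exceptional set does not depend on `μ`, so one `g` serves all of `M`. -/
theorem exists_stronglyMeasurable_forall_ae_tendsto {T X : Type*} [MeasurableSpace T]
    [PseudoMetricSpace X] [CompleteSpace X] (M : Set (Measure T)) {F : ℕ → T → X}
    (hF : ∀ k, StronglyMeasurable (F k)) {ε : ℕ → ℝ} (hε : Summable ε)
    (hsum : ∀ μ ∈ M, ∑' k, μ {t | ε k ≤ dist (F k t) (F (k + 1) t)} ≠ ⊤) :
    ∃ g : T → X, StronglyMeasurable g ∧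
      ∀ μ ∈ M, ∀ᵐ t ∂μ, Tendsto (fun k => F k t) atTop (𝓝 (g t)) := by
  classical
  set B : ℕ → Set T := fun k => {t | ε k ≤ dist (F k t) (F (k + 1) t)}
  set A : Set T := limsup B atTop
  have hA : MeasurableSet A := .measurableSet_limsup fun k =>
    measurableSet_le measurable_const ((hF k).dist (hF (k + 1))).measurable
  have hconv : ∀ t ∉ A, ∃ l, Tendsto (fun k => F k t) atTop (𝓝 l) := fun t ht => by
    rw [mem_limsup_iff_frequently_mem, not_frequently] at ht
    exact cauchySeq_tendsto_of_complete <| cauchySeq_of_eventually_dist_lt hε <|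
      ht.mono fun k hk => not_le.1 hk
  set F' : ℕ → T → X := fun k => A.piecewise (F 0) (F k)
  have hF' : ∀ t, ∃ l, Tendsto (fun k => F' k t) atTop (𝓝 l) := fun t => by
    by_cases ht : t ∈ A
    · exact ⟨F 0 t, by simp only [F', piecewise_eq_of_mem _ _ _ ht, tendsto_const_nhds]⟩
    · simpa only [F', piecewise_eq_of_notMem _ _ _ ht] using hconv t ht
  choose g hg using hF'
  refine ⟨g, stronglyMeasurable_of_tendsto atTop (fun k => (hF 0).piecewise hA (hF k))
      (tendsto_pi_nhds.2 hg), fun μ hμ => ?_⟩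
  have hAμ : μ A = 0 := measure_limsup_atTop_eq_zero (hsum μ hμ)
  filter_upwards [measure_eq_zero_iff_ae_notMem.1 hAμ] with t ht
  simpa only [F', piecewise_eq_of_notMem _ _ _ ht] using hg t

section Completeness

variable {T X : Type*} [MeasurableSpace T] [NormedAddCommGroup X] {θ : ℝ → ℝ}
  {M : Set (Measure T)} {f : ℕ → T → X}

theorem exists_strictMono_measure_dist_ge_le (hmono : MonotoneOn θ (Ici 0))
    (hcont : ContinuousOn θ (Ici 0)) (htop : Tendsto θ atTop atTop)
    (hmeas : ∀ n, StronglyMeasurable (f n))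
    (hcauchy : Tendsto (fun p : ℕ × ℕ => luxNormM θ M (fun t => f p.1 t - f p.2 t))
      atTop (𝓝 0)) :
    ∃ n : ℕ → ℕ, StrictMono n ∧ ∀ μ ∈ M, ∀ k,
      μ {t | (2⁻¹ : ℝ) ^ k ≤ dist (f (n k) t) (f (n (k + 1)) t)} ≤ 2⁻¹ ^ k := by
  choose u hθu hu using fun k : ℕ =>
    ((htop.eventually_ge_atTop (2 ^ k)).and (eventually_gt_atTop 0)).exists
  have hδ : ∀ k, 0 < ENNReal.ofReal ((2⁻¹ : ℝ) ^ k / u k) := fun k =>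
    ENNReal.ofReal_pos.2 (by have := hu k; positivity)
  obtain ⟨n, hn, hnδ⟩ := extraction_forall_of_eventually' fun k => by
    obtain ⟨a, ha⟩ := eventually_atTop_prod_self'.1 (hcauchy.eventually (gt_mem_nhds (hδ k)))
    exact ⟨a, fun p hp q hq => ha p hp q (hp.trans hq)⟩
  refine ⟨n, hn, fun μ hμ k => ?_⟩
  simp_rw [dist_eq_norm]
  calc _ ≤ (ENNReal.ofReal (θ (u k)))⁻¹ :=
        measure_le_norm_le_inv_of_luxNormM_lt hmono hcont ((hmeas _).sub (hmeas _)) (hu k)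
          (hnδ k (n (k + 1)) (hn.monotone k.le_succ)) hμ
    _ ≤ 2⁻¹ ^ k := by
        rw [← ENNReal.inv_pow, ENNReal.inv_le_inv, ← ENNReal.ofReal_ofNat 2,
          ← ENNReal.ofReal_pow zero_le_two]
        exact ENNReal.ofReal_le_ofReal (hθu k)

theorem tendsto_luxNormM_sub_of_tendsto_ae (hmono : MonotoneOn θ (Ici 0))
    (hcont : ContinuousOn θ (Ici 0)) (hmeas : ∀ n, StronglyMeasurable (f n))
    (hcauchy : Tendsto (fun p : ℕ × ℕ => luxNormM θ M (fun t => f p.1 t - f p.2 t))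
      atTop (𝓝 0)) {n : ℕ → ℕ} (hn : Tendsto n atTop atTop) {g : T → X}
    (hlim : ∀ μ ∈ M, ∀ᵐ t ∂μ, Tendsto (fun k => f (n k) t) atTop (𝓝 (g t))) :
    Tendsto (fun p => luxNormM θ M (fun t => f p t - g t)) atTop (𝓝 0) := by
  refine ENNReal.tendsto_nhds_zero.2 fun ε hε => ?_
  rcases eq_or_ne ε ⊤ with rfl | hεtop
  · exact .of_forall fun _ => le_top
  obtain ⟨a, ha⟩ := eventually_atTop_prod_self'.1 (hcauchy.eventually (gt_mem_nhds hε))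
  refine eventually_atTop.2 ⟨a, fun p hp => ?_⟩
  exact luxNormM_le_of_tendsto_ae hmono hcont (fun m => (hmeas p).sub (hmeas (n m)))
    (fun μ hμ => (hlim μ hμ).mono fun t ht => tendsto_const_nhds.sub ht) hεtop
    ((hn.eventually_ge_atTop a).mono fun m hm => ha p hp (n m) hm)

theorem luxNormM_lt_top_of_tendsto (hmono : MonotoneOn θ (Ici 0))
    (hconv : ConvexOn ℝ (Ici 0) θ) (hcont : ContinuousOn θ (Ici 0))
    (hmeas : ∀ n, StronglyMeasurable (f n)) (hfin : ∀ n, luxNormM θ M (f n) < ⊤) {g : T → X}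
    (hlim : Tendsto (fun p => luxNormM θ M (fun t => f p t - g t)) atTop (𝓝 0)) :
    luxNormM θ M g < ⊤ := by
  obtain ⟨p, hp⟩ := (hlim.eventually (gt_mem_nhds ENNReal.zero_lt_top)).exists
  simpa only [sub_sub_cancel] using luxNormM_sub_lt_top hmono hconv hcont (hmeas p) (hfin p) hp

end Completeness

theorem henstockOrlicz_complete_general {T X : Type*} [MeasurableSpace T]
    [NormedAddCommGroup X] [CompleteSpace X]
    (M : Set (Measure T))
    (θ : ℝ → ℝ) (hθ : IsYoungFunction θ)
    (f : ℕ → T → X) (hmeas : ∀ n, StronglyMeasurable (f n))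
    (hfin : ∀ n, luxNormM θ M (f n) < ⊤)
    (hcauchy : Tendsto (fun p : ℕ × ℕ => luxNormM θ M (fun t => f p.1 t - f p.2 t))
      atTop (nhds 0)) :
    ∃ g : T → X, StronglyMeasurable g ∧ luxNormM θ M g < ⊤ ∧
      Tendsto (fun n => luxNormM θ M (fun t => f n t - g t)) atTop (nhds 0) := by
  obtain ⟨n, hn, hfast⟩ := exists_strictMono_measure_dist_ge_le hθ.monotoneOn hθ.continuousOn
    hθ.tendsto_atTop hmeas hcauchy
  have hsum : ∀ μ ∈ M, ∑' k, μ {t | (2⁻¹ : ℝ) ^ k ≤ dist (f (n k) t) (f (n (k + 1)) t)} ≠ ⊤ :=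
    fun μ hμ => ne_top_of_le_ne_top (by simp [ENNReal.tsum_geometric])
      (ENNReal.tsum_le_tsum (hfast μ hμ))
  obtain ⟨g, hg, hlim⟩ := exists_stronglyMeasurable_forall_ae_tendsto M (fun k => hmeas (n k))
    (summable_geometric_of_lt_one (by norm_num) (by norm_num)) hsum
  have htend := tendsto_luxNormM_sub_of_tendsto_ae hθ.monotoneOn hθ.continuousOn hmeas hcauchy
    hn.tendsto_atTop hlim
  exact ⟨g, hg, luxNormM_lt_top_of_tendsto hθ.monotoneOn hθ.convexOn hθ.continuousOn hmeas hfin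
    htend, htend⟩

/-- `H^θ(M,X)` is complete with respect to `‖·‖_{θ,M}`. -/
theorem henstockOrlicz_complete {T X : Type*} [MeasurableSpace T]
    [NormedAddCommGroup X] [NormedSpace ℝ X] [CompleteSpace X]
    (M : Set (Measure T)) (hne : M.Nonempty) (hσ : SigmaBounded M)
    (θ : ℝ → ℝ) (hθ : IsYoungFunction θ)
    (f : ℕ → T → X) (hmeas : ∀ n, StronglyMeasurable (f n))
    (hfin : ∀ n, luxNormM θ M (f n) < ⊤)
    (hcauchy : Tendsto (fun p : ℕ × ℕ => luxNormM θ M (fun t => f p.1 t - f p.2 t))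
      atTop (nhds 0)) :
    ∃ g : T → X, StronglyMeasurable g ∧ luxNormM θ M g < ⊤ ∧
      Tendsto (fun n => luxNormM θ M (fun t => f n t - g t)) atTop (nhds 0) :=
  henstockOrlicz_complete_general M θ hθ f hmeas hfin hcauchy
end

section
/- Let (T, Σ) be a measurable space, M a nonempty σ-bounded family of measures on Σ, X a Banach space, and θ a Young function satisfying the Δ₂-condition. If (f_n) is a sequence of strongly measurable functions T → X with ‖f_n‖_{θ,M} < ∞ for all n and sup_{μ∈M} ∫_T θ(‖f_n(t)‖) dμ(t) → 0 as n → ∞, then ‖f_n‖_{θ,M} → 0 as n → ∞. -/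
/-! Iterating Δ₂ gives `θ (2ᵐ t) ≤ kᵐ θ t`. Hence once the modular of `fₙ` is at most `k⁻ᵐ`,
the modular of `2ᵐ fₙ` is at most `1`, i.e. the scale `2⁻ᵐ` is admissible in the infimum
defining `‖fₙ‖_{θ,M}`. -/

open MeasureTheory Filter Set

/-- The Δ₂-condition: there is `k > 0` with `θ(2t) ≤ k·θ(t)` for all `t ≥ 0`. -/
def Delta2 (θ : ℝ → ℝ) : Prop :=
  ∃ k : ℝ, 0 < k ∧ ∀ t, 0 ≤ t → θ (2 * t) ≤ k * θ t

noncomputable def modularM {T X : Type*} [MeasurableSpace T] [NormedAddCommGroup X]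
    (θ : ℝ → ℝ) (M : Set (Measure T)) (f : T → X) : ENNReal :=
  ⨆ μ ∈ M, ∫⁻ t, ENNReal.ofReal (θ ‖f t‖) ∂μ

theorem apply_two_pow_mul_le {θ : ℝ → ℝ} {k : ℝ} (hk : 0 ≤ k)
    (h : ∀ t, 0 ≤ t → θ (2 * t) ≤ k * θ t) (m : ℕ) {t : ℝ} (ht : 0 ≤ t) :
    θ (2 ^ m * t) ≤ k ^ m * θ t := by
  induction m with
  | zero => simp
  | succ m ih =>
    calc θ (2 ^ (m + 1) * t) = θ (2 * (2 ^ m * t)) := by ring_nf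
      _ ≤ k * θ (2 ^ m * t) := h _ (by positivity)
      _ ≤ k * (k ^ m * θ t) := mul_le_mul_of_nonneg_left ih hk
      _ = k ^ (m + 1) * θ t := by ring

theorem luxNormM_le_of_modularM_le {T X : Type*} [MeasurableSpace T] [NormedAddCommGroup X]
    {θ : ℝ → ℝ} {M : Set (Measure T)} {f : T → X} {c C : ℝ} (hc : 0 < c) (hC : 0 ≤ C)
    (hθ : ∀ t, 0 ≤ t → θ (c * t) ≤ C * θ t) (hf : modularM θ M f ≤ (ENNReal.ofReal C)⁻¹) :
    luxNormM θ M f ≤ ENNReal.ofReal c⁻¹ := by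
  refine sInf_le ⟨by simpa using hc, ENNReal.ofReal_ne_top, fun μ hμ => ?_⟩
  have hpoint : ∀ t, ENNReal.ofReal (θ (‖f t‖ / (ENNReal.ofReal c⁻¹).toReal))
      ≤ ENNReal.ofReal C * ENNReal.ofReal (θ ‖f t‖) := fun t => by
    rw [ENNReal.toReal_ofReal (by positivity), div_inv_eq_mul, mul_comm, ← ENNReal.ofReal_mul hC]
    exact ENNReal.ofReal_le_ofReal (hθ _ (norm_nonneg _))
  calc ∫⁻ t, ENNReal.ofReal (θ (‖f t‖ / (ENNReal.ofReal c⁻¹).toReal)) ∂μ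
      ≤ ∫⁻ t, ENNReal.ofReal C * ENNReal.ofReal (θ ‖f t‖) ∂μ := lintegral_mono hpoint
    _ = ENNReal.ofReal C * ∫⁻ t, ENNReal.ofReal (θ ‖f t‖) ∂μ :=
        lintegral_const_mul' _ _ ENNReal.ofReal_ne_top
    _ ≤ ENNReal.ofReal C * (ENNReal.ofReal C)⁻¹ := by
        gcongr
        exact (le_biSup (fun μ => ∫⁻ t, ENNReal.ofReal (θ ‖f t‖) ∂μ) hμ).trans hf
    _ ≤ 1 := ENNReal.mul_inv_le_one _

theorem luxNorm_tendsto_zero_of_modular_tendsto_zero_general {T X : Type*} [MeasurableSpace T]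
    [NormedAddCommGroup X]
    (M : Set (Measure T))
    (θ : ℝ → ℝ) (hΔ : Delta2 θ)
    (f : ℕ → T → X)
    (hmod : Tendsto (fun n => ⨆ μ ∈ M, ∫⁻ t, ENNReal.ofReal (θ ‖f n t‖) ∂μ)
      atTop (nhds 0)) :
    Tendsto (fun n => luxNormM θ M (f n)) atTop (nhds 0) := by
  obtain ⟨k, hk, hΔ2⟩ := hΔ
  rw [ENNReal.tendsto_nhds_zero]
  intro ε hε
  obtain ⟨m, hm⟩ := ENNReal.exists_inv_two_pow_lt hε.ne'
  have hsmall : ∀ᶠ n in atTop, modularM θ M (f n) ≤ (ENNReal.ofReal (k ^ m))⁻¹ :=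
    ENNReal.tendsto_nhds_zero.mp hmod _ (ENNReal.inv_pos.mpr ENNReal.ofReal_ne_top)
  filter_upwards [hsmall] with n hn
  calc luxNormM θ M (f n) ≤ ENNReal.ofReal ((2 : ℝ) ^ m)⁻¹ :=
        luxNormM_le_of_modularM_le (by positivity) (by positivity)
          (fun t ht => apply_two_pow_mul_le hk.le hΔ2 m ht) hn
    _ = 2⁻¹ ^ m := by
        rw [ENNReal.ofReal_inv_of_pos (by positivity), ENNReal.ofReal_pow zero_le_two,
          ENNReal.ofReal_ofNat, ENNReal.inv_pow]
    _ ≤ ε := hm.le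

/-- Under the Δ₂-condition, modular convergence to `0` implies norm convergence to `0` :
if `sup_{μ∈M} ∫ θ(‖fₙ‖) dμ → 0` then `‖fₙ‖_{θ,M} → 0`. -/
theorem luxNorm_tendsto_zero_of_modular_tendsto_zero {T X : Type*} [MeasurableSpace T]
    [NormedAddCommGroup X] [NormedSpace ℝ X] [CompleteSpace X]
    (M : Set (Measure T)) (hne : M.Nonempty) (hσ : SigmaBounded M)
    (θ : ℝ → ℝ) (hθ : IsYoungFunction θ) (hΔ : Delta2 θ)
    (f : ℕ → T → X) (hmeas : ∀ n, StronglyMeasurable (f n))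
    (hfin : ∀ n, luxNormM θ M (f n) < ⊤)
    (hmod : Tendsto (fun n => ⨆ μ ∈ M, ∫⁻ t, ENNReal.ofReal (θ ‖f n t‖) ∂μ)
      atTop (nhds 0)) :
    Tendsto (fun n => luxNormM θ M (f n)) atTop (nhds 0) :=
  luxNorm_tendsto_zero_of_modular_tendsto_zero_general M θ hΔ f hmod
end
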